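/- Attack splitting theorem for preferred semantics: with (F₁,F₂,R₃), R₃ᶜ, and F₂* as in the attack-splitting construction, (1) E₁ ∈ pref(F₁) and E₂ ∈ pref(F₂*) imply E₁ ∪ E₂ ∈ pref(F); and (2) E ∈ pref(F) implies E ∩ A₁ ∈ pref(F₁) and E ∩ A₂ ∈ pref(F₂*). -/
import Mathlib


variable {α : Type*}

/-- A bipolar set-argumentation framework: arguments `A`, collective attacks `R`,
collective supports `S`. -/
structure BSAF (α : Type*) where
  A : Set α
  R : Set (Set α × α)
  S : Set (Set α × α)

namespace BSAF

/-- Membership in the least superset of `E` that is closed under the supports of `F`. -/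
inductive InCl (F : BSAF α) (E : Set α) : α → Prop
  | base {a : α} : a ∈ E → InCl F E a
  | step {T : Set α} {h : α} : (T, h) ∈ F.S → (∀ t ∈ T, InCl F E t) → InCl F E h

/-- The closure of `E` under the supports of `F`. -/
def cl (F : BSAF α) (E : Set α) : Set α := {a | F.InCl E a}

/-- `E` is closed if its closure equals itself. -/
def Closed (F : BSAF α) (E : Set α) : Prop := F.cl E = E

/-- `E` attacks the set `D`. -/
def Attacks (F : BSAF α) (E D : Set α) : Prop :=
  ∃ T h, (T, h) ∈ F.R ∧ T ⊆ E ∧ h ∈ D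

/-- `E` is conflict-free: it does not attack itself. -/
def ConflictFree (F : BSAF α) (E : Set α) : Prop :=
  ¬ ∃ T h, (T, h) ∈ F.R ∧ T ⊆ E ∧ h ∈ E

/-- `E` defends `a`: every closed attacker of `a` is attacked by `E`. -/
def Defends (F : BSAF α) (E : Set α) (a : α) : Prop :=
  ∀ D : Set α, D ⊆ F.A → F.Closed D → (∃ T, (T, a) ∈ F.R ∧ T ⊆ D) → F.Attacks E D

/-- `E` is admissible: conflict-free, closed, and defends each of its members. -/
def Admissible (F : BSAF α) (E : Set α) : Prop :=
  E ⊆ F.A ∧ F.ConflictFree E ∧ F.Closed E ∧ ∀ a ∈ E, F.Defends E a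

/-- `E` is complete: admissible and contains every argument it defends. -/
def Complete (F : BSAF α) (E : Set α) : Prop :=
  F.Admissible E ∧ ∀ a ∈ F.A, F.Defends E a → a ∈ E

/-- Grounded: ⊆-minimal complete. -/
def Grounded (F : BSAF α) (E : Set α) : Prop :=
  F.Complete E ∧ ∀ E', F.Complete E' → E' ⊆ E → E' = E

/-- Preferred: ⊆-maximal admissible. -/
def Preferred (F : BSAF α) (E : Set α) : Prop :=
  F.Admissible E ∧ ∀ E', F.Admissible E' → E ⊆ E' → E' = E

/-- Stable: admissible and attacks every outside argument. -/
def Stable (F : BSAF α) (E : Set α) : Prop :=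
  F.Admissible E ∧ ∀ x ∈ F.A \ E, ∃ T, (T, x) ∈ F.R ∧ T ⊆ E

end BSAF
namespace BSAF

/-- All links of `G` stay within its argument set. -/
def WithinA (G : BSAF α) : Prop :=
  (∀ p ∈ G.R, p.1 ⊆ G.A ∧ p.2 ∈ G.A) ∧ (∀ p ∈ G.S, p.1 ⊆ G.A ∧ p.2 ∈ G.A)

/-- `(F₁, F₂, R₃)` is an attack splitting of `F`. -/
def IsAttackSplitting (F F₁ F₂ : BSAF α) (R₃ : Set (Set α × α)) : Prop :=
  F₁.WithinA ∧ F₂.WithinA ∧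
  F₁.A ∩ F₂.A = ∅ ∧ F.A = F₁.A ∪ F₂.A ∧
  F.S = F₁.S ∪ F₂.S ∧
  F.R = F₁.R ∪ F₂.R ∪ R₃ ∧
  ∀ p ∈ R₃, (p.1 ∩ F₁.A).Nonempty ∧ p.1 ⊆ F.A ∧ p.2 ∈ F₂.A

/-- The closed negative links `R₃ᶜ = {(cl(T), h) | (T, h) ∈ R₃}`. -/
def closedLinks (F : BSAF α) (R₃ : Set (Set α × α)) : Set (Set α × α) :=
  {p | ∃ T h, (T, h) ∈ R₃ ∧ p = (F.cl T, h)}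

/-- The arguments attacked by `E` via the attack relation `Rs`. -/
def attackedBy (Rs : Set (Set α × α)) (E : Set α) : Set α :=
  {a | ∃ T, (T, a) ∈ Rs ∧ T ⊆ E}

/-- The `(E₁, R₃ᶜ)`-reduct of `F₂`. -/
def Rreduct (F F₁ F₂ : BSAF α) (R₃ : Set (Set α × α)) (E₁ : Set α) : BSAF α where
  A := F₂.A
  R := F₂.R ∪ {p | ∃ T h, (T, h) ∈ F.closedLinks R₃ ∧
        T ∩ attackedBy (F₁.R ∪ F.closedLinks R₃) E₁ = ∅ ∧
        T ∩ F₁.A ⊆ E₁ ∧ p = (T ∩ F₂.A, h)}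
  S := F₂.S

/-- The undecided links in `R₃ᶜ` w.r.t. `E₁`. -/
def undecidedLinks (F F₁ : BSAF α) (R₃ : Set (Set α × α)) (E₁ : Set α) : Set (Set α × α) :=
  {p | p ∈ F.closedLinks R₃ ∧
    p.1 ∩ attackedBy (F₁.R ∪ F.closedLinks R₃) E₁ = ∅ ∧ ¬ p.1 ∩ F₁.A ⊆ E₁}

/-- The modification `F₂* = mod^{E₁}_{R₃ᶜ}(F₂^{E₁})`, with fresh self-attacker `s₀`. -/
def modification (F F₁ F₂ : BSAF α) (R₃ : Set (Set α × α)) (E₁ : Set α) (s₀ : α) : BSAF α where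
  A := F₂.A ∪ {s₀}
  R := (F.Rreduct F₁ F₂ R₃ E₁).R ∪ {({s₀}, s₀)} ∪
       {p | ∃ T h, (T, h) ∈ F.undecidedLinks F₁ R₃ E₁ ∧ p = ((T ∩ F₂.A) ∪ {s₀}, h)}
  S := F₂.S

end BSAF


namespace BSAF

variable {α : Type*}

lemma InCl.mono {F : BSAF α} {E E' : Set α} (h : E ⊆ E') {a : α} (ha : F.InCl E a) :
    F.InCl E' a := by
  induction ha with
  | base hb => exact .base (h hb)
  | step hs _ ih => exact .step hs ih

lemma InCl.sub {F : BSAF α} {E X : Set α} (hE : E ⊆ X) (hS : ∀ p ∈ F.S, p.2 ∈ X) {a : α}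
    (ha : F.InCl E a) : a ∈ X := by
  induction ha with
  | base hb => exact hE hb
  | step hs _ _ => exact hS _ hs

lemma InCl.of_cl {F : BSAF α} {E : Set α} {a : α} (ha : F.InCl (F.cl E) a) : F.InCl E a := by
  induction ha with
  | base hb => exact hb
  | step hs _ ih => exact .step hs ih

lemma subset_cl {F : BSAF α} {E : Set α} : E ⊆ F.cl E := fun _ h => .base h

lemma cl_closed (F : BSAF α) (E : Set α) : F.Closed (F.cl E) :=
  Set.Subset.antisymm (fun _ h => h.of_cl) subset_cl

lemma Closed.cl_subset {F : BSAF α} {E D : Set α} (hD : F.Closed D) (h : E ⊆ D) :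
    F.cl E ⊆ D := by
  intro a ha
  rw [← hD]
  exact InCl.mono h ha

lemma InCl.congrS {F G : BSAF α} (hS : F.S = G.S) {E : Set α} {a : α}
    (ha : F.InCl E a) : G.InCl E a := by
  induction ha with
  | base hb => exact .base hb
  | step hs _ ih => exact .step (hS ▸ hs) ih

end BSAF

namespace BSAF

variable {α : Type*}

/-- Bundled hypotheses of an attack splitting together with the fresh argument `s₀`. -/
structure Ctx (F F₁ F₂ : BSAF α) (R₃ : Set (Set α × α)) (s₀ : α) : Prop where
  w1 : F₁.WithinA
  w2 : F₂.WithinA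
  disj : F₁.A ∩ F₂.A = ∅
  aeq : F.A = F₁.A ∪ F₂.A
  seq : F.S = F₁.S ∪ F₂.S
  req : F.R = F₁.R ∪ F₂.R ∪ R₃
  r3 : ∀ p ∈ R₃, (p.1 ∩ F₁.A).Nonempty ∧ p.1 ⊆ F.A ∧ p.2 ∈ F₂.A
  hs : s₀ ∉ F.A

namespace Ctx

variable {F F₁ F₂ : BSAF α} {R₃ : Set (Set α × α)} {s₀ : α}
variable (C : Ctx F F₁ F₂ R₃ s₀)
include C

lemma notMem₁₂ {a : α} (h1 : a ∈ F₁.A) (h2 : a ∈ F₂.A) : False :=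
  Set.eq_empty_iff_forall_notMem.mp C.disj a ⟨h1, h2⟩

lemma subA₁ : F₁.A ⊆ F.A := by rw [C.aeq]; exact Set.subset_union_left
lemma subA₂ : F₂.A ⊆ F.A := by rw [C.aeq]; exact Set.subset_union_right

lemma s₀_not₂ : s₀ ∉ F₂.A := fun h => C.hs (C.subA₂ h)
lemma s₀_not₁ : s₀ ∉ F₁.A := fun h => C.hs (C.subA₁ h)

lemma R_cases {p : Set α × α} (hp : p ∈ F.R) : p ∈ F₁.R ∨ p ∈ F₂.R ∨ p ∈ R₃ := by
  rw [C.req] at hp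
  rcases hp with (h | h) | h
  · exact Or.inl h
  · exact Or.inr (Or.inl h)
  · exact Or.inr (Or.inr h)

lemma R1_subset : F₁.R ⊆ F.R := by
  rw [C.req]; intro p hp; exact Or.inl (Or.inl hp)

lemma R2_subset : F₂.R ⊆ F.R := by
  rw [C.req]; intro p hp; exact Or.inl (Or.inr hp)

lemma R3_subset : R₃ ⊆ F.R := by
  rw [C.req]; intro p hp; exact Or.inr hp

lemma R1_spec {T : Set α} {h : α} (hT : (T, h) ∈ F₁.R) : T ⊆ F₁.A ∧ h ∈ F₁.A := C.w1.1 _ hT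
lemma R2_spec {T : Set α} {h : α} (hT : (T, h) ∈ F₂.R) : T ⊆ F₂.A ∧ h ∈ F₂.A := C.w2.1 _ hT

lemma attack_head₁ {V : Set α} {x : α} (h : (V, x) ∈ F.R) (hx : x ∈ F₁.A) : (V, x) ∈ F₁.R := by
  rcases C.R_cases h with h1 | h2 | h3
  · exact h1
  · exact (C.notMem₁₂ hx (C.R2_spec h2).2).elim
  · exact (C.notMem₁₂ hx (C.r3 _ h3).2.2).elim

lemma cl_sub_A {E : Set α} (hE : E ⊆ F.A) : F.cl E ⊆ F.A := by
  intro a ha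
  refine InCl.sub hE ?_ ha
  intro p hp
  rw [C.seq] at hp
  rw [C.aeq]
  rcases hp with h | h
  · exact Or.inl (C.w1.2 _ h).2
  · exact Or.inr (C.w2.2 _ h).2

lemma closedLinks_spec {T : Set α} {h : α} (hT : (T, h) ∈ F.closedLinks R₃) :
    T ⊆ F.A ∧ h ∈ F₂.A ∧ F.Closed T ∧ ∃ T₀, T₀ ⊆ T ∧ (T₀, h) ∈ R₃ := by
  obtain ⟨T₀, h₀, hm, heq⟩ := hT
  have e1 : T = F.cl T₀ := congrArg Prod.fst heq
  have e2 : h = h₀ := congrArg Prod.snd heq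
  subst e1; subst e2
  refine ⟨C.cl_sub_A (C.r3 _ hm).2.1, (C.r3 _ hm).2.2, cl_closed F T₀, T₀, subset_cl, hm⟩

lemma incl₁_to {X E : Set α} (hX : X ⊆ E) {a : α} (h : F₁.InCl X a) : F.InCl E a := by
  induction h with
  | base hb => exact .base (hX hb)
  | step hs _ ih => exact .step (by rw [C.seq]; exact Or.inl hs) ih

lemma incl₂_to {X E : Set α} (hX : X ⊆ E) {a : α} (h : F₂.InCl X a) : F.InCl E a := by
  induction h with
  | base hb => exact .base (hX hb)
  | step hs _ ih => exact .step (by rw [C.seq]; exact Or.inr hs) ih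

lemma incl₁_mem₁ {X : Set α} (hX : X ⊆ F₁.A) {a : α} (h : F₁.InCl X a) : a ∈ F₁.A :=
  InCl.sub hX (fun p hp => (C.w1.2 p hp).2) h

lemma incl₂_mem₂ {X : Set α} (hX : X ⊆ F₂.A) {a : α} (h : F₂.InCl X a) : a ∈ F₂.A :=
  InCl.sub hX (fun p hp => (C.w2.2 p hp).2) h

lemma incl_decomp {E : Set α} (hE : E ⊆ F.A) {a : α} :
    F.InCl E a ↔ F₁.InCl (E ∩ F₁.A) a ∨ F₂.InCl (E ∩ F₂.A) a := by
  constructor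
  · intro h
    induction h with
    | base hb =>
      have hm := hE hb
      rw [C.aeq] at hm
      rcases hm with h1 | h2
      · exact Or.inl (.base ⟨hb, h1⟩)
      · exact Or.inr (.base ⟨hb, h2⟩)
    | step hs hT ih =>
      rw [C.seq] at hs
      rcases hs with hs | hs
      · refine Or.inl (.step hs ?_)
        intro t ht
        rcases ih t ht with h | h
        · exact h
        · exact (C.notMem₁₂ ((C.w1.2 _ hs).1 ht)
            (C.incl₂_mem₂ Set.inter_subset_right h)).elim
      · refine Or.inr (.step hs ?_)
        intro t ht
        rcases ih t ht with h | h
        · exact (C.notMem₁₂ (C.incl₁_mem₁ Set.inter_subset_right h)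
            ((C.w2.2 _ hs).1 ht)).elim
        · exact h
  · intro h
    rcases h with h | h
    · exact C.incl₁_to Set.inter_subset_left h
    · exact C.incl₂_to Set.inter_subset_left h

lemma cl_inter₁ {E : Set α} (hE : E ⊆ F.A) : F.cl E ∩ F₁.A = F₁.cl (E ∩ F₁.A) := by
  ext a
  constructor
  · rintro ⟨ha, h1⟩
    rcases (C.incl_decomp hE).mp ha with h | h
    · exact h
    · exact (C.notMem₁₂ h1 (C.incl₂_mem₂ Set.inter_subset_right h)).elim
  · intro h
    exact ⟨(C.incl_decomp hE).mpr (Or.inl h), C.incl₁_mem₁ Set.inter_subset_right h⟩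

lemma cl_inter₂ {E : Set α} (hE : E ⊆ F.A) : F.cl E ∩ F₂.A = F₂.cl (E ∩ F₂.A) := by
  ext a
  constructor
  · rintro ⟨ha, h2⟩
    rcases (C.incl_decomp hE).mp ha with h | h
    · exact (C.notMem₁₂ (C.incl₁_mem₁ Set.inter_subset_right h) h2).elim
    · exact h
  · intro h
    exact ⟨(C.incl_decomp hE).mpr (Or.inr h), C.incl₂_mem₂ Set.inter_subset_right h⟩

lemma closed_decomp {E : Set α} (hE : E ⊆ F.A) :
    F.Closed E ↔ F₁.Closed (E ∩ F₁.A) ∧ F₂.Closed (E ∩ F₂.A) := by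
  constructor
  · intro h
    constructor
    · show F₁.cl (E ∩ F₁.A) = E ∩ F₁.A
      rw [← C.cl_inter₁ hE, h]
    · show F₂.cl (E ∩ F₂.A) = E ∩ F₂.A
      rw [← C.cl_inter₂ hE, h]
  · rintro ⟨h1, h2⟩
    apply Set.Subset.antisymm _ subset_cl
    intro a ha
    rcases (C.incl_decomp hE).mp ha with h | h
    · have : a ∈ F₁.cl (E ∩ F₁.A) := h
      rw [h1] at this
      exact this.1
    · have : a ∈ F₂.cl (E ∩ F₂.A) := h
      rw [h2] at this
      exact this.1

end Ctx
end BSAF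

namespace BSAF
namespace Ctx

variable {α : Type*} {F F₁ F₂ : BSAF α} {R₃ : Set (Set α × α)} {s₀ : α}
variable (C : Ctx F F₁ F₂ R₃ s₀)

lemma star_closed {B X : Set α} :
    (F.modification F₁ F₂ R₃ B s₀).Closed X ↔ F₂.Closed X := by
  have e : (F.modification F₁ F₂ R₃ B s₀).S = F₂.S := rfl
  have hcl : (F.modification F₁ F₂ R₃ B s₀).cl X = F₂.cl X := by
    ext a
    exact ⟨fun h => InCl.congrS e h, fun h => InCl.congrS e.symm h⟩
  unfold Closed
  rw [hcl]

include C

lemma closed_insert {X : Set α} (hX : F₂.Closed X) :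
    F₂.Closed (X ∪ {s₀}) := by
  apply Set.Subset.antisymm _ subset_cl
  intro a ha
  have key : ∀ b : α, F₂.InCl (X ∪ {s₀}) b → F₂.InCl X b ∨ b = s₀ := by
    intro b hb
    induction hb with
    | base hb =>
      rcases hb with h | h
      · exact Or.inl (.base h)
      · exact Or.inr h
    | step hs _ ih =>
      refine Or.inl (.step hs ?_)
      intro t ht
      rcases ih t ht with h | h
      · exact h
      · exact absurd ((C.w2.2 _ hs).1 ht) (by rw [h]; exact C.s₀_not₂)
  rcases key a ha with h | h
  · exact Or.inl (by rw [← hX]; exact h)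
  · exact Or.inr h

omit C

lemma mem_star_R2 {B : Set α} {p : Set α × α} (hp : p ∈ F₂.R) :
    p ∈ (F.modification F₁ F₂ R₃ B s₀).R :=
  Or.inl (Or.inl (Or.inl hp))

lemma mem_star_self {B : Set α} : (({s₀}, s₀) : Set α × α) ∈ (F.modification F₁ F₂ R₃ B s₀).R :=
  Or.inl (Or.inr rfl)

lemma mem_star_red {B T : Set α} {h : α} (hT : (T, h) ∈ F.closedLinks R₃)
    (hAtt : T ∩ attackedBy (F₁.R ∪ F.closedLinks R₃) B = ∅) (hTB : T ∩ F₁.A ⊆ B) :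
    (T ∩ F₂.A, h) ∈ (F.modification F₁ F₂ R₃ B s₀).R :=
  Or.inl (Or.inl (Or.inr ⟨T, h, hT, hAtt, hTB, rfl⟩))

lemma mem_star_undec {B T : Set α} {h : α} (hT : (T, h) ∈ F.closedLinks R₃)
    (hAtt : T ∩ attackedBy (F₁.R ∪ F.closedLinks R₃) B = ∅) (hTB : ¬ T ∩ F₁.A ⊆ B) :
    ((T ∩ F₂.A) ∪ {s₀}, h) ∈ (F.modification F₁ F₂ R₃ B s₀).R :=
  Or.inr ⟨T, h, ⟨hT, hAtt, hTB⟩, rfl⟩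

lemma mem_star_cases {B : Set α} {p : Set α × α}
    (hp : p ∈ (F.modification F₁ F₂ R₃ B s₀).R) :
    p ∈ F₂.R ∨
    (∃ T h, (T, h) ∈ F.closedLinks R₃ ∧
      T ∩ attackedBy (F₁.R ∪ F.closedLinks R₃) B = ∅ ∧ T ∩ F₁.A ⊆ B ∧ p = (T ∩ F₂.A, h)) ∨
    p = ({s₀}, s₀) ∨
    (∃ T h, (T, h) ∈ F.closedLinks R₃ ∧
      T ∩ attackedBy (F₁.R ∪ F.closedLinks R₃) B = ∅ ∧ ¬ T ∩ F₁.A ⊆ B ∧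
      p = ((T ∩ F₂.A) ∪ {s₀}, h)) := by
  rcases hp with ((h | h) | h) | h
  · exact Or.inl h
  · exact Or.inr (Or.inl h)
  · exact Or.inr (Or.inr (Or.inl h))
  · obtain ⟨T, hh, ⟨hm, h1, h2⟩, he⟩ := h
    exact Or.inr (Or.inr (Or.inr ⟨T, hh, hm, h1, h2, he⟩))

include C

omit C in
lemma star_s₀_notMem {B E₂ : Set α}
    (h : (F.modification F₁ F₂ R₃ B s₀).Admissible E₂) : s₀ ∉ E₂ := fun hs =>
  h.2.1 ⟨{s₀}, s₀, mem_star_self, Set.singleton_subset_iff.mpr hs, hs⟩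

lemma star_sub₂ {B E₂ : Set α}
    (h : (F.modification F₁ F₂ R₃ B s₀).Admissible E₂) : E₂ ⊆ F₂.A := by
  intro t ht
  rcases h.1 ht with h2 | hs
  · exact h2
  · rw [Set.mem_singleton_iff] at hs
    subst hs
    exact absurd ht (star_s₀_notMem h)

end Ctx
end BSAF

namespace BSAF
namespace Ctx

variable {α : Type*} {F F₁ F₂ : BSAF α} {R₃ : Set (Set α × α)} {s₀ : α}
variable (C : Ctx F F₁ F₂ R₃ s₀)
include C

/-- No element of an `F`-admissible set `E` is attacked by `B ⊇ E ∩ A₁` via `R₁ ∪ R₃ᶜ`. -/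
lemma not_attacked {E B : Set α} (hE : F.Admissible E) (hB : F₁.Admissible B)
    (hEB : E ∩ F₁.A ⊆ B) {y : α} (hy : y ∈ E)
    (hatt : y ∈ attackedBy (F₁.R ∪ F.closedLinks R₃) B) : False := by
  obtain ⟨P, hP, hPB⟩ := hatt
  rcases hP with hP | hP
  · exact hB.2.1 ⟨P, y, hP, hPB, hEB ⟨hy, (C.R1_spec hP).2⟩⟩
  · obtain ⟨hPA, hy2, hPc, T₀, hT₀P, hT₀⟩ := C.closedLinks_spec hP
    have hPF : P ⊆ F.A := (hPB.trans hB.1).trans C.subA₁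
    obtain ⟨Q, w, hQw, hQE, hwP⟩ :=
      hE.2.2.2 y hy P hPF hPc ⟨T₀, C.R3_subset hT₀, hT₀P⟩
    have hw1 : w ∈ F₁.A := hB.1 (hPB hwP)
    have hQw1 : (Q, w) ∈ F₁.R := C.attack_head₁ hQw hw1
    exact hB.2.1 ⟨Q, w, hQw1, fun x hx => hEB ⟨hQE hx, (C.R1_spec hQw1).1 hx⟩, hPB hwP⟩

/-- An `F`-attack from `E` with head in `A₂` yields an attack in `F₂*`. -/
lemma push_attack {E B : Set α} (hE : F.Admissible E) (hB : F₁.Admissible B)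
    (hEB : E ∩ F₁.A ⊆ B) {V : Set α} {x : α} (hVx : (V, x) ∈ F.R) (hVE : V ⊆ E)
    (hx : x ∈ F₂.A) :
    ∃ U, (U, x) ∈ (F.modification F₁ F₂ R₃ B s₀).R ∧ U ⊆ E ∩ F₂.A := by
  rcases C.R_cases hVx with h | h | h
  · exact absurd (C.R1_spec h).2 (fun h1 => C.notMem₁₂ h1 hx)
  · exact ⟨V, mem_star_R2 h, fun t ht => ⟨hVE ht, (C.R2_spec h).1 ht⟩⟩
  · have hVc : (F.cl V, x) ∈ F.closedLinks R₃ := ⟨V, x, h, rfl⟩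
    have hVcE : F.cl V ⊆ E := Closed.cl_subset hE.2.2.1 hVE
    have hdec : F.cl V ∩ F₁.A ⊆ B := fun t ht => hEB ⟨hVcE ht.1, ht.2⟩
    have hAtt : F.cl V ∩ attackedBy (F₁.R ∪ F.closedLinks R₃) B = ∅ :=
      Set.eq_empty_iff_forall_notMem.mpr
        (fun y hy => C.not_attacked hE hB hEB (hVcE hy.1) hy.2)
    exact ⟨F.cl V ∩ F₂.A, mem_star_red hVc hAtt hdec, fun t ht => ⟨hVcE ht.1, ht.2⟩⟩

/-- An attack from `E₂ ⊆ E ∩ A₂` in `F₂*` yields an `F`-attack with the same head. -/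
lemma star_attack_to_F {E₁ E₂ : Set α} (hs0 : s₀ ∉ E₂)
    {U : Set α} {x : α} (hUx : (U, x) ∈ (F.modification F₁ F₂ R₃ E₁ s₀).R) (hUE : U ⊆ E₂) :
    x ∈ F₂.A ∧ ∃ V, (V, x) ∈ F.R ∧ V ⊆ E₁ ∪ E₂ := by
  rcases mem_star_cases hUx with h | h | h | h
  · exact ⟨(C.R2_spec h).2, U, C.R2_subset h, hUE.trans Set.subset_union_right⟩
  · obtain ⟨T, h', hTc, hAtt, hTB, heq⟩ := h
    have e1 : U = T ∩ F₂.A := congrArg Prod.fst heq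
    have e2 : x = h' := congrArg Prod.snd heq
    subst e1; subst e2
    obtain ⟨hTA, hx2, hTclosed, T₀, hT₀T, hT₀⟩ := C.closedLinks_spec hTc
    refine ⟨hx2, T₀, C.R3_subset hT₀, ?_⟩
    intro t ht
    have htA : t ∈ F.A := hTA (hT₀T ht)
    rw [C.aeq] at htA
    rcases htA with h1 | h2
    · exact Or.inl (hTB ⟨hT₀T ht, h1⟩)
    · exact Or.inr (hUE ⟨hT₀T ht, h2⟩)
  · have e1 : U = {s₀} := congrArg Prod.fst h
    exact absurd (hUE (by rw [e1]; exact rfl)) hs0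
  · obtain ⟨T, h', hTc, hAtt, hTB, heq⟩ := h
    have e1 : U = (T ∩ F₂.A) ∪ {s₀} := congrArg Prod.fst heq
    exact absurd (hUE (by rw [e1]; exact Or.inr rfl)) hs0

/-- Core of the defense argument inside `F₂*`. -/
lemma defends_core {E B : Set α} (hE : F.Admissible E) (hB : F₁.Admissible B)
    (hEB : E ∩ F₁.A ⊆ B) {a : α} (ha : a ∈ E) {D₂ G : Set α}
    (hD₂ : F₂.Closed D₂) (hG : G ⊆ F.A) (hGA2 : G ∩ F₂.A ⊆ D₂)
    (hwit : ∃ T₀, (T₀, a) ∈ F.R ∧ T₀ ⊆ G)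
    (hA1 : ∀ x, x ∈ F.cl G → x ∈ F₁.A →
      x ∈ attackedBy (F₁.R ∪ F.closedLinks R₃) B → False) :
    ∃ U x, (U, x) ∈ (F.modification F₁ F₂ R₃ B s₀).R ∧ U ⊆ E ∩ F₂.A ∧ x ∈ D₂ := by
  obtain ⟨T₀, hT₀R, hT₀G⟩ := hwit
  obtain ⟨V, x, hVx, hVE, hxD⟩ :=
    hE.2.2.2 a ha (F.cl G) (C.cl_sub_A hG) (cl_closed F G)
      ⟨T₀, hT₀R, hT₀G.trans subset_cl⟩
  have hxA := C.cl_sub_A hG hxD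
  rw [C.aeq] at hxA
  rcases hxA with hx1 | hx2
  · exact absurd
      (⟨V, Or.inl (C.attack_head₁ hVx hx1),
        fun t ht => hEB ⟨hVE ht, (C.R1_spec (C.attack_head₁ hVx hx1)).1 ht⟩⟩ :
        x ∈ attackedBy (F₁.R ∪ F.closedLinks R₃) B)
      (fun h => hA1 x hxD hx1 h)
  · have hxD₂ : x ∈ D₂ := by
      have hm : x ∈ F.cl G ∩ F₂.A := ⟨hxD, hx2⟩
      rw [C.cl_inter₂ hG] at hm
      exact Closed.cl_subset hD₂ hGA2 hm
    obtain ⟨U, hU, hUE⟩ := C.push_attack hE hB hEB hVx hVE hx2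
    exact ⟨U, x, hU, hUE, hxD₂⟩

end Ctx
end BSAF

namespace BSAF
namespace Ctx

variable {α : Type*} {F F₁ F₂ : BSAF α} {R₃ : Set (Set α × α)} {s₀ : α}
variable (C : Ctx F F₁ F₂ R₃ s₀)
include C

/-- Restriction of an `F`-admissible set to `A₁` is `F₁`-admissible. -/
lemma admissible_restrict₁ {E : Set α} (hE : F.Admissible E) :
    F₁.Admissible (E ∩ F₁.A) := by
  refine ⟨Set.inter_subset_right, ?_, ((C.closed_decomp hE.1).mp hE.2.2.1).1, ?_⟩
  · rintro ⟨T, h, hTh, hTE, hhE⟩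
    exact hE.2.1 ⟨T, h, C.R1_subset hTh, hTE.trans Set.inter_subset_left, hhE.1⟩
  · intro a ha D₁ hD₁A hD₁c hatt
    obtain ⟨T, hTa, hTD⟩ := hatt
    have hD₁F : D₁ ⊆ F.A := hD₁A.trans C.subA₁
    obtain ⟨V, x, hVx, hVE, hxD⟩ :=
      hE.2.2.2 a ha.1 (F.cl D₁) (C.cl_sub_A hD₁F) (cl_closed F D₁)
        ⟨T, C.R1_subset hTa, hTD.trans subset_cl⟩
    have hxA := C.cl_sub_A hD₁F hxD
    rw [C.aeq] at hxA
    rcases hxA with hx1 | hx2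
    · have hVx1 := C.attack_head₁ hVx hx1
      refine ⟨V, x, hVx1, fun t ht => ⟨hVE ht, (C.R1_spec hVx1).1 ht⟩, ?_⟩
      have hm : x ∈ F.cl D₁ ∩ F₁.A := ⟨hxD, hx1⟩
      rw [C.cl_inter₁ hD₁F, Set.inter_eq_left.mpr hD₁A, hD₁c] at hm
      exact hm
    · exfalso
      have hm : x ∈ F.cl D₁ ∩ F₂.A := ⟨hxD, hx2⟩
      rw [C.cl_inter₂ hD₁F] at hm
      have hsub : F₂.cl (D₁ ∩ F₂.A) ⊆ E := by
        have h2 : D₁ ∩ F₂.A ⊆ E ∩ F₂.A :=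
          fun t ht => (C.notMem₁₂ (hD₁A ht.1) ht.2).elim
        exact (Closed.cl_subset ((C.closed_decomp hE.1).mp hE.2.2.1).2 h2).trans
          Set.inter_subset_left
      exact hE.2.1 ⟨V, x, hVx, hVE, hsub hm⟩

/-- Restriction of an `F`-admissible set to `A₂` is admissible in `F₂*(B)`
for any `F₁`-admissible `B ⊇ E ∩ A₁`. -/
lemma admissible_star {E B : Set α} (hE : F.Admissible E) (hB : F₁.Admissible B)
    (hEB : E ∩ F₁.A ⊆ B) :
    (F.modification F₁ F₂ R₃ B s₀).Admissible (E ∩ F₂.A) := by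
  have hcl₁ : F₁.Closed (E ∩ F₁.A) := ((C.closed_decomp hE.1).mp hE.2.2.1).1
  have hcl₂ : F₂.Closed (E ∩ F₂.A) := ((C.closed_decomp hE.1).mp hE.2.2.1).2
  refine ⟨Set.inter_subset_right.trans Set.subset_union_left, ?_,
    star_closed.mpr hcl₂, ?_⟩
  · -- conflict-freeness
    rintro ⟨U, h, hUh, hUE, hhE⟩
    rcases mem_star_cases hUh with hc | hc | hc | hc
    · exact hE.2.1 ⟨U, h, C.R2_subset hc, hUE.trans Set.inter_subset_left, hhE.1⟩
    · obtain ⟨T, h', hTc, hAtt, hTB, heq⟩ := hc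
      have e1 : U = T ∩ F₂.A := congrArg Prod.fst heq
      have e2 : h = h' := congrArg Prod.snd heq
      subst e1; subst e2
      obtain ⟨hTA, hh2, hTclosed, T₀, hT₀T, hT₀⟩ := C.closedLinks_spec hTc
      obtain ⟨Q, w, hQw, hQE, hwT⟩ :=
        hE.2.2.2 h hhE.1 T hTA hTclosed ⟨T₀, C.R3_subset hT₀, hT₀T⟩
      have hwA : w ∈ F.A := hTA hwT
      rw [C.aeq] at hwA
      rcases hwA with hw1 | hw2
      · have hQw1 := C.attack_head₁ hQw hw1
        exact Set.eq_empty_iff_forall_notMem.mp hAtt w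
          ⟨hwT, Q, Or.inl hQw1, fun t ht => hEB ⟨hQE ht, (C.R1_spec hQw1).1 ht⟩⟩
      · exact hE.2.1 ⟨Q, w, hQw, hQE, (hUE ⟨hwT, hw2⟩).1⟩
    · have e2 : h = s₀ := congrArg Prod.snd hc
      exact C.s₀_not₂ (e2 ▸ hhE.2)
    · obtain ⟨T, h', hTc, hAtt, hTB, heq⟩ := hc
      have e1 : U = (T ∩ F₂.A) ∪ {s₀} := congrArg Prod.fst heq
      exact C.s₀_not₂ (hUE (by rw [e1]; exact Or.inr rfl)).2
  · -- defense
    intro a ha Ds hDsA hDsc hatt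
    obtain ⟨U, hUa, hUD⟩ := hatt
    have hDclosed : F₂.Closed Ds := star_closed.mp hDsc
    have hD₂ : F₂.Closed (Ds ∩ F₂.A) := by
      apply Set.Subset.antisymm _ subset_cl
      intro t ht
      refine ⟨?_, C.incl₂_mem₂ Set.inter_subset_right ht⟩
      rw [← hDclosed]
      exact InCl.mono Set.inter_subset_left ht
    have key : ∀ G : Set α, G ⊆ F.A → G ∩ F₂.A ⊆ Ds ∩ F₂.A →
        (∃ T₀, (T₀, a) ∈ F.R ∧ T₀ ⊆ G) →
        (∀ x, x ∈ F.cl G → x ∈ F₁.A →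
          x ∈ attackedBy (F₁.R ∪ F.closedLinks R₃) B → False) →
        (F.modification F₁ F₂ R₃ B s₀).Attacks (E ∩ F₂.A) Ds := by
      intro G hG hGA2 hwit hA1
      obtain ⟨U', x, hU', hU'E, hxD⟩ :=
        C.defends_core hE hB hEB ha.1 hD₂ hG hGA2 hwit hA1
      exact ⟨U', x, hU', hU'E, hxD.1⟩
    rcases mem_star_cases hUa with hc | hc | hc | hc
    · -- attacker from R₂
      refine key U ((C.R2_spec hc).1.trans C.subA₂)
        (fun t ht => ⟨hUD ht.1, ht.2⟩) ⟨U, C.R2_subset hc, subset_rfl⟩ ?_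
      intro x hx hx1 hxatt
      have hm : x ∈ F.cl U ∩ F₁.A := ⟨hx, hx1⟩
      rw [C.cl_inter₁ ((C.R2_spec hc).1.trans C.subA₂)] at hm
      have hsub : U ∩ F₁.A ⊆ E ∩ F₁.A :=
        fun t ht => (C.notMem₁₂ ht.2 ((C.R2_spec hc).1 ht.1)).elim
      have hxE : x ∈ E ∩ F₁.A := by
        rw [← hcl₁]
        exact InCl.mono hsub hm
      exact C.not_attacked hE hB hEB hxE.1 hxatt
    · -- attacker via a decided-in closed link
      obtain ⟨T, h', hTc, hAtt, hTB, heq⟩ := hc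
      have e1 : U = T ∩ F₂.A := congrArg Prod.fst heq
      have e2 : a = h' := congrArg Prod.snd heq
      subst e1
      obtain ⟨hTA, hh2, hTclosed, T₀, hT₀T, hT₀⟩ := C.closedLinks_spec hTc
      refine key (T ∪ (Ds ∩ F₂.A)) ?_ ?_ ⟨T₀, e2 ▸ C.R3_subset hT₀, hT₀T.trans Set.subset_union_left⟩ ?_
      · exact Set.union_subset hTA (Set.inter_subset_right.trans C.subA₂)
      · rintro t ⟨ht | ht, h2⟩
        · exact ⟨hUD ⟨ht, h2⟩, h2⟩
        · exact ht
      · intro x hx hx1 hxatt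
        have hm : x ∈ F.cl (T ∪ (Ds ∩ F₂.A)) ∩ F₁.A := ⟨hx, hx1⟩
        rw [C.cl_inter₁ (Set.union_subset hTA (Set.inter_subset_right.trans C.subA₂))] at hm
        have hsub : (T ∪ (Ds ∩ F₂.A)) ∩ F₁.A ⊆ T ∩ F₁.A := by
          rintro t ⟨ht | ht, h2⟩
          · exact ⟨ht, h2⟩
          · exact (C.notMem₁₂ h2 ht.2).elim
        have hTcl : F₁.cl (T ∩ F₁.A) = T ∩ F₁.A := by
          rw [← C.cl_inter₁ hTA, hTclosed]
        have hxT : x ∈ T ∩ F₁.A := by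
          rw [← hTcl]
          exact InCl.mono hsub hm
        exact Set.eq_empty_iff_forall_notMem.mp hAtt x ⟨hxT.1, hxatt⟩
    · -- self-attacker
      exfalso
      have e2 : a = s₀ := congrArg Prod.snd hc
      exact C.s₀_not₂ (e2 ▸ ha.2)
    · -- attacker via an undecided link
      obtain ⟨T, h', hTc, hAtt, hTB, heq⟩ := hc
      have e1 : U = (T ∩ F₂.A) ∪ {s₀} := congrArg Prod.fst heq
      have e2 : a = h' := congrArg Prod.snd heq
      obtain ⟨hTA, hh2, hTclosed, T₀, hT₀T, hT₀⟩ := C.closedLinks_spec hTc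
      refine key (T ∪ (Ds ∩ F₂.A)) ?_ ?_ ⟨T₀, e2 ▸ C.R3_subset hT₀, hT₀T.trans Set.subset_union_left⟩ ?_
      · exact Set.union_subset hTA (Set.inter_subset_right.trans C.subA₂)
      · rintro t ⟨ht | ht, h2⟩
        · refine ⟨hUD ?_, h2⟩
          rw [e1]
          exact Or.inl ⟨ht, h2⟩
        · exact ht
      · intro x hx hx1 hxatt
        have hm : x ∈ F.cl (T ∪ (Ds ∩ F₂.A)) ∩ F₁.A := ⟨hx, hx1⟩
        rw [C.cl_inter₁ (Set.union_subset hTA (Set.inter_subset_right.trans C.subA₂))] at hm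
        have hsub : (T ∪ (Ds ∩ F₂.A)) ∩ F₁.A ⊆ T ∩ F₁.A := by
          rintro t ⟨ht | ht, h2⟩
          · exact ⟨ht, h2⟩
          · exact (C.notMem₁₂ h2 ht.2).elim
        have hTcl : F₁.cl (T ∩ F₁.A) = T ∩ F₁.A := by
          rw [← C.cl_inter₁ hTA, hTclosed]
        have hxT : x ∈ T ∩ F₁.A := by
          rw [← hTcl]
          exact InCl.mono hsub hm
        exact Set.eq_empty_iff_forall_notMem.mp hAtt x ⟨hxT.1, hxatt⟩

/-- Joining an `F₁`-admissible set with an admissible set of `F₂*` gives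
an `F`-admissible set. -/
lemma admissible_join {E₁ E₂ : Set α} (h1 : F₁.Admissible E₁)
    (h2 : (F.modification F₁ F₂ R₃ E₁ s₀).Admissible E₂) :
    F.Admissible (E₁ ∪ E₂) := by
  have hs0 : s₀ ∉ E₂ := star_s₀_notMem h2
  have hE₂A : E₂ ⊆ F₂.A := C.star_sub₂ h2
  have hE1 : (E₁ ∪ E₂) ∩ F₁.A = E₁ := by
    apply Set.Subset.antisymm
    · rintro t ⟨ht | ht, h1'⟩
      · exact ht
      · exact (C.notMem₁₂ h1' (hE₂A ht)).elim
    · exact fun t ht => ⟨Or.inl ht, h1.1 ht⟩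
  have hE2 : (E₁ ∪ E₂) ∩ F₂.A = E₂ := by
    apply Set.Subset.antisymm
    · rintro t ⟨ht | ht, h2'⟩
      · exact (C.notMem₁₂ (h1.1 ht) h2').elim
      · exact ht
    · exact fun t ht => ⟨Or.inr ht, hE₂A ht⟩
  have hsubA : E₁ ∪ E₂ ⊆ F.A := by
    rw [C.aeq]
    exact Set.union_subset (h1.1.trans Set.subset_union_left)
      (hE₂A.trans Set.subset_union_right)
  have hclosed : F.Closed (E₁ ∪ E₂) := by
    rw [C.closed_decomp hsubA, hE1, hE2]
    exact ⟨h1.2.2.1, star_closed.mp h2.2.2.1⟩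
  refine ⟨hsubA, ?_, hclosed, ?_⟩
  · -- conflict-freeness
    rintro ⟨T, h, hTh, hTE, hhE⟩
    rcases C.R_cases hTh with hc | hc | hc
    · refine h1.2.1 ⟨T, h, hc, ?_, ?_⟩
      · exact fun t ht => (hE1 ▸ (⟨hTE ht, (C.R1_spec hc).1 ht⟩ : t ∈ (E₁ ∪ E₂) ∩ F₁.A))
      · exact hE1 ▸ (⟨hhE, (C.R1_spec hc).2⟩ : h ∈ (E₁ ∪ E₂) ∩ F₁.A)
    · refine h2.2.1 ⟨T, h, mem_star_R2 hc, ?_, ?_⟩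
      · exact fun t ht => (hE2 ▸ (⟨hTE ht, (C.R2_spec hc).1 ht⟩ : t ∈ (E₁ ∪ E₂) ∩ F₂.A))
      · exact hE2 ▸ (⟨hhE, (C.R2_spec hc).2⟩ : h ∈ (E₁ ∪ E₂) ∩ F₂.A)
    · -- R₃ attack inside E₁ ∪ E₂
      have hTcE : F.cl T ⊆ E₁ ∪ E₂ := Closed.cl_subset hclosed hTE
      have hTcRc : (F.cl T, h) ∈ F.closedLinks R₃ := ⟨T, h, hc, rfl⟩
      have hhE₂ : h ∈ E₂ := hE2 ▸ (⟨hhE, (C.r3 _ hc).2.2⟩ : h ∈ (E₁ ∪ E₂) ∩ F₂.A)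
      have hTc1 : F.cl T ∩ F₁.A ⊆ E₁ := fun t ht => hE1 ▸ (⟨hTcE ht.1, ht.2⟩ : t ∈ (E₁ ∪ E₂) ∩ F₁.A)
      by_cases hAtt : F.cl T ∩ attackedBy (F₁.R ∪ F.closedLinks R₃) E₁ = ∅
      · exact h2.2.1 ⟨F.cl T ∩ F₂.A, h, mem_star_red hTcRc hAtt hTc1,
          fun t ht => hE2 ▸ (⟨hTcE ht.1, ht.2⟩ : t ∈ (E₁ ∪ E₂) ∩ F₂.A), hhE₂⟩
      · obtain ⟨y, hyTc, P, hP, hPE₁⟩ := Set.nonempty_iff_ne_empty.mpr hAtt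
        rcases hP with hP | hP
        · exact h1.2.1 ⟨P, y, hP, hPE₁,
            hE1 ▸ (⟨hTcE hyTc, (C.R1_spec hP).2⟩ : y ∈ (E₁ ∪ E₂) ∩ F₁.A)⟩
        · obtain ⟨hPA, hy2, hPclosed, P₀, hP₀P, hP₀⟩ := C.closedLinks_spec hP
          have hPdec : P ∩ attackedBy (F₁.R ∪ F.closedLinks R₃) E₁ = ∅ := by
            apply Set.eq_empty_iff_forall_notMem.mpr
            rintro z ⟨hzP, Q, hQ, hQE₁⟩
            rcases hQ with hQ | hQ
            · exact h1.2.1 ⟨Q, z, hQ, hQE₁, hPE₁ hzP⟩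
            · exact C.notMem₁₂ (h1.1 (hPE₁ hzP)) (C.closedLinks_spec hQ).2.1
          refine h2.2.1 ⟨P ∩ F₂.A, y,
            mem_star_red hP hPdec (fun t ht => hPE₁ ht.1), ?_,
            hE2 ▸ (⟨hTcE hyTc, hy2⟩ : y ∈ (E₁ ∪ E₂) ∩ F₂.A)⟩
          rintro t ⟨ht, ht2⟩
          exact (C.notMem₁₂ (h1.1 (hPE₁ ht)) ht2).elim
  · -- defense
    intro a ha D hD hDc hatt
    obtain ⟨T, hTa, hTD⟩ := hatt
    rcases C.R_cases hTa with hc | hc | hc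
    · -- attacker from R₁
      have ha1 : a ∈ E₁ := hE1 ▸ (⟨ha, (C.R1_spec hc).2⟩ : a ∈ (E₁ ∪ E₂) ∩ F₁.A)
      obtain ⟨U, x, hUx, hUE₁, hxD⟩ :=
        h1.2.2.2 a ha1 (D ∩ F₁.A) Set.inter_subset_right
          ((C.closed_decomp hD).mp hDc).1
          ⟨T, hc, fun t ht => ⟨hTD ht, (C.R1_spec hc).1 ht⟩⟩
      exact ⟨U, x, C.R1_subset hUx, hUE₁.trans Set.subset_union_left, hxD.1⟩
    · -- attacker from R₂
      have ha2 : a ∈ E₂ := hE2 ▸ (⟨ha, (C.R2_spec hc).2⟩ : a ∈ (E₁ ∪ E₂) ∩ F₂.A)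
      obtain ⟨U, x, hUx, hUE₂, hxD⟩ :=
        h2.2.2.2 a ha2 (D ∩ F₂.A)
          (Set.inter_subset_right.trans Set.subset_union_left)
          (star_closed.mpr ((C.closed_decomp hD).mp hDc).2)
          ⟨T, mem_star_R2 hc, fun t ht => ⟨hTD ht, (C.R2_spec hc).1 ht⟩⟩
      obtain ⟨hx2, V, hVx, hVsub⟩ := C.star_attack_to_F hs0 hUx hUE₂
      exact ⟨V, x, hVx, hVsub, hxD.1⟩
    · -- attacker from R₃
      have ha2 : a ∈ E₂ := hE2 ▸ (⟨ha, (C.r3 _ hc).2.2⟩ : a ∈ (E₁ ∪ E₂) ∩ F₂.A)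
      have hTcD : F.cl T ⊆ D := Closed.cl_subset hDc hTD
      have hTcRc : (F.cl T, a) ∈ F.closedLinks R₃ := ⟨T, a, hc, rfl⟩
      by_cases hAtt : F.cl T ∩ attackedBy (F₁.R ∪ F.closedLinks R₃) E₁ = ∅
      · by_cases hdec : F.cl T ∩ F₁.A ⊆ E₁
        · -- decided-in link
          obtain ⟨U, x, hUx, hUE₂, hxD⟩ :=
            h2.2.2.2 a ha2 (D ∩ F₂.A)
              (Set.inter_subset_right.trans Set.subset_union_left)
              (star_closed.mpr ((C.closed_decomp hD).mp hDc).2)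
              ⟨F.cl T ∩ F₂.A, mem_star_red hTcRc hAtt hdec,
                fun t ht => ⟨hTcD ht.1, ht.2⟩⟩
          obtain ⟨hx2, V, hVx, hVsub⟩ := C.star_attack_to_F hs0 hUx hUE₂
          exact ⟨V, x, hVx, hVsub, hxD.1⟩
        · -- undecided link
          have htail : (F.cl T ∩ F₂.A) ∪ {s₀} ⊆ (D ∩ F₂.A) ∪ {s₀} := by
            rintro t (ht | ht)
            · exact Or.inl ⟨hTcD ht.1, ht.2⟩
            · exact Or.inr ht
          obtain ⟨U, x, hUx, hUE₂, hxD⟩ :=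
            h2.2.2.2 a ha2 ((D ∩ F₂.A) ∪ {s₀})
              (Set.union_subset (Set.inter_subset_right.trans Set.subset_union_left)
                Set.subset_union_right)
              (star_closed.mpr (C.closed_insert ((C.closed_decomp hD).mp hDc).2))
              ⟨(F.cl T ∩ F₂.A) ∪ {s₀}, mem_star_undec hTcRc hAtt hdec, htail⟩
          obtain ⟨hx2, V, hVx, hVsub⟩ := C.star_attack_to_F hs0 hUx hUE₂
          refine ⟨V, x, hVx, hVsub, ?_⟩
          rcases hxD with hxD | hxD
          · exact hxD.1
          · rw [Set.mem_singleton_iff] at hxD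
            exact absurd hx2 (by rw [hxD]; exact C.s₀_not₂)
      · -- decided-out link: E₁ already attacks the tail inside D
        obtain ⟨y, hyTc, P, hP, hPE₁⟩ := Set.nonempty_iff_ne_empty.mpr hAtt
        rcases hP with hP | hP
        · exact ⟨P, y, C.R1_subset hP, hPE₁.trans Set.subset_union_left, hTcD hyTc⟩
        · obtain ⟨hPA, hy2, hPclosed, P₀, hP₀P, hP₀⟩ := C.closedLinks_spec hP
          exact ⟨P₀, y, C.R3_subset hP₀,
            (hP₀P.trans hPE₁).trans Set.subset_union_left, hTcD hyTc⟩

end Ctx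
end BSAF

/-- Attack splitting theorem for preferred semantics. -/
theorem BSAF.attackSplitting_preferred (F F₁ F₂ : BSAF α) (R₃ : Set (Set α × α))
    (hsplit : F.IsAttackSplitting F₁ F₂ R₃) (hfin : F.A.Finite)
    (s₀ : α) (hs₀ : s₀ ∉ F.A) :
    (∀ E₁ E₂ : Set α, F₁.Preferred E₁ →
      (F.modification F₁ F₂ R₃ E₁ s₀).Preferred E₂ → F.Preferred (E₁ ∪ E₂)) ∧
    (∀ E : Set α, F.Preferred E →
      F₁.Preferred (E ∩ F₁.A) ∧
      (F.modification F₁ F₂ R₃ (E ∩ F₁.A) s₀).Preferred (E ∩ F₂.A)) := by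
  obtain ⟨w1, w2, disj, aeq, seq, req, r3⟩ := hsplit
  have C : BSAF.Ctx F F₁ F₂ R₃ s₀ := ⟨w1, w2, disj, aeq, seq, req, r3, hs₀⟩
  constructor
  · -- joining preferred extensions
    intro E₁ E₂ hP1 hP2
    have hs0 : s₀ ∉ E₂ := Ctx.star_s₀_notMem hP2.1
    have hE₂A : E₂ ⊆ F₂.A := C.star_sub₂ hP2.1
    refine ⟨C.admissible_join hP1.1 hP2.1, ?_⟩
    intro E' hE' hsub
    have h1' := C.admissible_restrict₁ hE'
    have e1 : E₁ ⊆ E' ∩ F₁.A := fun t ht => ⟨hsub (Or.inl ht), hP1.1.1 ht⟩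
    have hE'A1 : E' ∩ F₁.A = E₁ := hP1.2 _ h1' e1
    have h2' : (F.modification F₁ F₂ R₃ E₁ s₀).Admissible (E' ∩ F₂.A) :=
      C.admissible_star hE' hP1.1 hE'A1.le
    have e2 : E₂ ⊆ E' ∩ F₂.A := fun t ht => ⟨hsub (Or.inr ht), hE₂A ht⟩
    have hE'A2 : E' ∩ F₂.A = E₂ := hP2.2 _ h2' e2
    calc E' = E' ∩ F.A := (Set.inter_eq_left.mpr hE'.1).symm
      _ = (E' ∩ F₁.A) ∪ (E' ∩ F₂.A) := by rw [aeq, Set.inter_union_distrib_left]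
      _ = E₁ ∪ E₂ := by rw [hE'A1, hE'A2]
  · -- splitting a preferred extension
    intro E hPE
    have hadm := hPE.1
    have hB1 := C.admissible_restrict₁ hadm
    have hdecompE : ∀ B' : Set α, E ∩ F₁.A ⊆ B' → E ⊆ B' ∪ (E ∩ F₂.A) := by
      intro B' hB' t ht
      have := hadm.1 ht
      rw [aeq] at this
      rcases this with h | h
      · exact Or.inl (hB' ⟨ht, h⟩)
      · exact Or.inr ⟨ht, h⟩
    constructor
    · refine ⟨hB1, ?_⟩
      intro B hB hEB
      have hC2 := C.admissible_star hadm hB hEB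
      have hA := C.admissible_join hB hC2
      have heq := hPE.2 _ hA (hdecompE B hEB)
      apply Set.Subset.antisymm _ hEB
      intro t ht
      exact ⟨heq ▸ Or.inl ht, hB.1 ht⟩
    · have hB2 : (F.modification F₁ F₂ R₃ (E ∩ F₁.A) s₀).Admissible (E ∩ F₂.A) :=
        C.admissible_star hadm hB1 subset_rfl
      refine ⟨hB2, ?_⟩
      intro E₂' h2' hsub2
      have hA := C.admissible_join hB1 h2'
      have hsubE : E ⊆ (E ∩ F₁.A) ∪ E₂' := by
        intro t ht
        rcases hdecompE (E ∩ F₁.A) subset_rfl ht with h | h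
        · exact Or.inl h
        · exact Or.inr (hsub2 h)
      have heq := hPE.2 _ hA hsubE
      have hE₂'A : E₂' ⊆ F₂.A := C.star_sub₂ h2'
      apply Set.Subset.antisymm _ hsub2
      intro t ht
      exact ⟨heq ▸ Or.inr ht, hE₂'A ht⟩
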